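/- Let 1 < p ≤ 2, let w, r, γ > 0 with r ≤ w, and let x', y' ∈ ℝ^t satisfy ‖x'-y'‖_p ≤ r. Then every point z in the ℓ_p ball of radius w·(1-(2+γ)r^p/(2w)^p)^{1/p} centered at (x'+y')/2 lies in at least one of: (a) the intersection B_p(x',w) ∩ B_p(y',w), (b) the ball B_p(x', w·(1-(2+2γ)r^p/(2w)^p)^{1/p}), or (c) the ball B_p(y', w·(1-(2+2γ)r^p/(2w)^p)^{1/p}). -/

import Mathlib

noncomputable def pnorm (p : ℝ) {t : ℕ} (x : Fin t → ℝ) : ℝ :=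
  (∑ i, |x i| ^ p) ^ (1 / p)

noncomputable def ballp (p : ℝ) {t : ℕ} (c : Fin t → ℝ) (R : ℝ) : Set (Fin t → ℝ) :=
  {z | pnorm p (z - c) ≤ R}

/-!
With `m = (x' + y')/2`, the `p`-uniform smoothness (Clarkson) inequality applied to `z - x'` and
`z - y'` gives `‖z - x'‖ᵖ + ‖z - y'‖ᵖ ≤ 2 (‖z - m‖ᵖ + ‖x' - y'‖ᵖ / 2ᵖ)`, and for `z` in the ball
around `m` the right side is at most `wᵖ + wᵖ (1 - (2 + 2γ) rᵖ / (2w)ᵖ)`. Hence if `z` lies outside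
one of the two balls of radius `w`, it lies in the smaller ball around the other centre.
Coordinatewise, Clarkson's inequality follows from concavity and subadditivity of `u ↦ u^(p/2)`
applied to `(s ± d)²`.
-/

lemma abs_rpow_eq_sq_rpow_half (x p : ℝ) : |x| ^ p = (x ^ 2) ^ (p / 2) := by
  rw [← sq_abs, ← Real.rpow_natCast, ← Real.rpow_mul (abs_nonneg x)]
  congr 1
  ring

lemma abs_add_rpow_add_abs_sub_rpow_le {p : ℝ} (hp1 : 1 ≤ p) (hp2 : p ≤ 2) (s d : ℝ) :
    |s + d| ^ p + |s - d| ^ p ≤ 2 * (|s| ^ p + |d| ^ p) := by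
  have hq0 : 0 ≤ p / 2 := by linarith
  have hq1 : p / 2 ≤ 1 := by linarith
  simp only [abs_rpow_eq_sq_rpow_half _ p]
  have hconcave := (Real.concaveOn_rpow hq0 hq1).2 (Set.mem_Ici.2 (sq_nonneg (s + d)))
    (Set.mem_Ici.2 (sq_nonneg (s - d))) (by norm_num : (0 : ℝ) ≤ 1 / 2)
    (by norm_num : (0 : ℝ) ≤ 1 / 2) (by norm_num)
  have hmid : 1 / 2 * (s + d) ^ 2 + 1 / 2 * (s - d) ^ 2 = s ^ 2 + d ^ 2 := by ring
  simp only [smul_eq_mul, hmid] at hconcave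
  have hsubadd := Real.rpow_add_le_add_rpow (sq_nonneg s) (sq_nonneg d) hq0 hq1
  linarith

section pnorm

variable {p : ℝ} {t : ℕ}

lemma pnorm_nonneg (v : Fin t → ℝ) : 0 ≤ pnorm p v :=
  Real.rpow_nonneg (Finset.sum_nonneg fun _ _ => Real.rpow_nonneg (abs_nonneg _) _) _

lemma pnorm_rpow (hp : 0 < p) (v : Fin t → ℝ) : pnorm p v ^ p = ∑ i, |v i| ^ p := by
  rw [pnorm, ← Real.rpow_mul (Finset.sum_nonneg fun _ _ => Real.rpow_nonneg (abs_nonneg _) _),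
    one_div_mul_cancel hp.ne', Real.rpow_one]

lemma pnorm_const_smul_rpow (hp : 0 < p) (c : ℝ) (v : Fin t → ℝ) :
    pnorm p (c • v) ^ p = |c| ^ p * pnorm p v ^ p := by
  simp only [pnorm_rpow hp, Finset.mul_sum, Pi.smul_apply, smul_eq_mul, abs_mul,
    Real.mul_rpow (abs_nonneg _) (abs_nonneg _)]

lemma pnorm_add_rpow_add_pnorm_sub_rpow_le (hp1 : 1 ≤ p) (hp2 : p ≤ 2) (a b : Fin t → ℝ) :
    pnorm p (a + b) ^ p + pnorm p (a - b) ^ p ≤ 2 * (pnorm p a ^ p + pnorm p b ^ p) := by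
  have hp : 0 < p := by linarith
  simp only [pnorm_rpow hp, ← Finset.sum_add_distrib, Finset.mul_sum, Pi.add_apply, Pi.sub_apply]
  exact Finset.sum_le_sum fun i _ => abs_add_rpow_add_abs_sub_rpow_le hp1 hp2 (a i) (b i)

lemma pnorm_sub_rpow_add_pnorm_sub_rpow_le_midpoint (hp1 : 1 ≤ p) (hp2 : p ≤ 2)
    (x y z : Fin t → ℝ) :
    pnorm p (z - x) ^ p + pnorm p (z - y) ^ p ≤
      2 * (pnorm p (z - (x + y) / 2) ^ p + pnorm p (x - y) ^ p / 2 ^ p) := by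
  have hp : 0 < p := by linarith
  have hplus : z - (x + y) / 2 + (2⁻¹ : ℝ) • (x - y) = z - y := by
    ext i; simp only [Pi.add_apply, Pi.sub_apply, Pi.div_apply, Pi.smul_apply, smul_eq_mul,
      Pi.ofNat_apply]; ring
  have hminus : z - (x + y) / 2 - (2⁻¹ : ℝ) • (x - y) = z - x := by
    ext i; simp only [Pi.add_apply, Pi.sub_apply, Pi.div_apply, Pi.smul_apply, smul_eq_mul,
      Pi.ofNat_apply]; ring
  have h := pnorm_add_rpow_add_pnorm_sub_rpow_le hp1 hp2 (z - (x + y) / 2) ((2⁻¹ : ℝ) • (x - y))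
  rw [hplus, hminus, pnorm_const_smul_rpow hp, abs_inv, abs_two,
    Real.inv_rpow zero_le_two, inv_mul_eq_div, add_comm] at h
  exact h

lemma mem_ballp_iff_rpow_le (hp : 0 < p) {c z : Fin t → ℝ} {R : ℝ} (hR : 0 ≤ R) :
    z ∈ ballp p c R ↔ pnorm p (z - c) ^ p ≤ R ^ p :=
  (Real.rpow_le_rpow_iff (pnorm_nonneg _) hR hp).symm

lemma mem_ballp_mul_rpow_iff (hp : 0 < p) {c z : Fin t → ℝ} {w ε : ℝ} (hw : 0 ≤ w)
    (hε : ε ≤ 1) :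
    z ∈ ballp p c (w * (1 - ε) ^ (1 / p)) ↔ pnorm p (z - c) ^ p ≤ w ^ p * (1 - ε) := by
  have hε' : 0 ≤ 1 - ε := by linarith
  rw [mem_ballp_iff_rpow_le hp (by positivity), Real.mul_rpow hw (by positivity),
    ← Real.rpow_mul hε', one_div_mul_cancel hp.ne', Real.rpow_one]

end pnorm

theorem close_balls_cover_general (p : ℝ) (hp1 : 1 < p) (hp2 : p ≤ 2) (t : ℕ)
    (w r γ : ℝ) (hw : 0 < w) (hγ : 0 < γ)
    (hrad : (2 + 2 * γ) * r ^ p ≤ (2 * w) ^ p)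
    (x' y' : Fin t → ℝ) (hxy : pnorm p (x' - y') ≤ r)
    (z : Fin t → ℝ)
    (hz : z ∈ ballp p ((x' + y') / 2) (w * (1 - (2 + γ) * r ^ p / (2 * w) ^ p) ^ (1 / p))) :
    z ∈ (ballp p x' w ∩ ballp p y' w) ∪
        ballp p x' (w * (1 - (2 + 2 * γ) * r ^ p / (2 * w) ^ p) ^ (1 / p)) ∪
        ballp p y' (w * (1 - (2 + 2 * γ) * r ^ p / (2 * w) ^ p) ^ (1 / p)) := by
  have hp : 0 < p := by linarith
  have hr : 0 ≤ r := (pnorm_nonneg _).trans hxy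
  have hE : (2 + 2 * γ) * r ^ p / (2 * w) ^ p ≤ 1 := (div_le_one (by positivity)).2 hrad
  have hE' : (2 + γ) * r ^ p / (2 * w) ^ p ≤ (2 + 2 * γ) * r ^ p / (2 * w) ^ p := by
    gcongr; linarith
  have hmid := (mem_ballp_mul_rpow_iff hp hw.le (hE'.trans hE)).1 hz
  have hdiff : pnorm p (x' - y') ^ p ≤ r ^ p := Real.rpow_le_rpow (pnorm_nonneg _) hxy hp.le
  have hsum : pnorm p (z - x') ^ p + pnorm p (z - y') ^ p ≤
      w ^ p + w ^ p * (1 - (2 + 2 * γ) * r ^ p / (2 * w) ^ p) :=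
    calc _ ≤ 2 * (pnorm p (z - (x' + y') / 2) ^ p + pnorm p (x' - y') ^ p / 2 ^ p) :=
          pnorm_sub_rpow_add_pnorm_sub_rpow_le_midpoint hp1.le hp2 x' y' z
      _ ≤ 2 * (w ^ p * (1 - (2 + γ) * r ^ p / (2 * w) ^ p) + r ^ p / 2 ^ p) := by gcongr
      _ = w ^ p + w ^ p * (1 - (2 + 2 * γ) * r ^ p / (2 * w) ^ p) := by
          rw [Real.mul_rpow zero_le_two hw.le]; field_simp; ring
  simp only [Set.mem_union, Set.mem_inter_iff, mem_ballp_mul_rpow_iff hp hw.le hE,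
    mem_ballp_iff_rpow_le hp hw.le]
  rcases le_or_gt (pnorm p (z - x') ^ p) (w ^ p) with hx | hx
  · rcases le_or_gt (pnorm p (z - y') ^ p) (w ^ p) with hy | hy
    · exact Or.inl (Or.inl ⟨hx, hy⟩)
    · exact Or.inl (Or.inr (by linarith))
  · exact Or.inr (by linarith)

theorem close_balls_cover (p : ℝ) (hp1 : 1 < p) (hp2 : p ≤ 2) (t : ℕ)
    (w r γ : ℝ) (hw : 0 < w) (hr : 0 < r) (hγ : 0 < γ) (hrw : r ≤ w)
    (hrad : (2 + 2 * γ) * r ^ p ≤ (2 * w) ^ p)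
    (x' y' : Fin t → ℝ) (hxy : pnorm p (x' - y') ≤ r)
    (z : Fin t → ℝ)
    (hz : z ∈ ballp p ((x' + y') / 2) (w * (1 - (2 + γ) * r ^ p / (2 * w) ^ p) ^ (1 / p))) :
    z ∈ (ballp p x' w ∩ ballp p y' w) ∪
        ballp p x' (w * (1 - (2 + 2 * γ) * r ^ p / (2 * w) ^ p) ^ (1 / p)) ∪
        ballp p y' (w * (1 - (2 + 2 * γ) * r ^ p / (2 * w) ^ p) ^ (1 / p)) :=
  close_balls_cover_general p hp1 hp2 t w r γ hw hγ hrad x' y' hxy z hz
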